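/- arXiv:1412.5213 — 2 statements merged into one kernel-verified Lean document; each statement's English description precedes it below -/
import Mathlib

section
/- The three-qubit XOR state ψ_XOR is strongly contextual for the measurements Y and Z at each party: there is no global assignment g : Fin 3 → M → Bool such that for every context c : Fin 3 → M, the induced outcome i ↦ g i (c i) has nonzero amplitude with respect to ψ_XOR. -/
noncomputable section

/-- Inner product of two `n`-qubit states `(Fin n → Bool) → ℂ`. -/
def inner' {n : ℕ} (φ ψ : (Fin n → Bool) → ℂ) : ℂ :=
  ∑ s : Fin n → Bool, (starRingEnd ℂ) (φ s) * ψ s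

/-- Tensor product of local vectors. -/
def tensor {n : ℕ} (v : Fin n → Bool → ℂ) : (Fin n → Bool) → ℂ :=
  fun s => ∏ i, v i (s i)

/-- `Y`-measurement eigenvectors: `yvec false = (1/√2, i/√2)`,
`yvec true = (1/√2, -i/√2)`. -/
def yvec (b : Bool) : Bool → ℂ :=
  fun b' => if b' then (if b then -Complex.I else Complex.I) * (Real.sqrt 2 : ℂ)⁻¹
    else (Real.sqrt 2 : ℂ)⁻¹

/-- `Z`-measurement eigenvectors. -/
def evec (b : Bool) : Bool → ℂ := fun b' => if b = b' then 1 else 0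

/-- The measurement set: `Y` or `Z` at each site. -/
inductive M | Y | Z

/-- The eigenvector family of each measurement. -/
def mvec : M → Bool → Bool → ℂ
  | M.Y => yvec
  | M.Z => evec

/-- The amplitude of outcome `o` in context `c` for a 3-qubit state `ψ`. -/
def amp (ψ : (Fin 3 → Bool) → ℂ) (c : Fin 3 → M) (o : Fin 3 → Bool) : ℂ :=
  inner' (tensor fun i => mvec (c i) (o i)) ψ

/-- A global assignment is consistent if its induced outcome is possible in
every context. -/
def consistent (ψ : (Fin 3 → Bool) → ℂ) (g : Fin 3 → M → Bool) : Prop :=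
  ∀ c : Fin 3 → M, amp ψ c (fun i => g i (c i)) ≠ 0

/-- The three-qubit XOR state. -/
def psiXOR : (Fin 3 → Bool) → ℂ :=
  fun s => if s 2 = Bool.xor (s 0) (s 1) then (1/2 : ℂ) else 0

/-!
In the `X` basis `ψ_XOR` is the GHZ state `(|+++⟩ + |−−−⟩)/√2`, so each amplitude of a product
measurement is a sum of two products of local overlaps. Computing these shows that `ZZZ` only
yields outcomes of even parity, while each of `YYZ`, `YZY`, `ZYY` only yields outcomes of odd
parity. A global assignment would satisfy all four constraints; but summing the last three mod 2
gives the parity of the three `Z` values, since each `Y` value occurs twice, contradicting the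
first (Mermin's argument).
-/

open Complex ComplexConjugate

lemma inner'_eq_dotProduct {n : ℕ} (φ ψ : (Fin n → Bool) → ℂ) : inner' φ ψ = star φ ⬝ᵥ ψ := rfl

lemma inner'_tensor_tensor {n : ℕ} (v w : Fin n → Bool → ℂ) :
    inner' (tensor v) (tensor w) = ∏ i, ∑ b, conj (v i b) * w i b := by
  simp only [inner', tensor, map_prod, ← Finset.prod_mul_distrib]
  exact (Finset.prod_univ_sum (fun _ => Finset.univ) fun i b => conj (v i b) * w i b).symm

def zsign (b : Bool) : ℂ := if b then -1 else 1

@[simp] lemma zsign_false : zsign false = 1 := rfl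

@[simp] lemma zsign_true : zsign true = -1 := rfl

lemma zsign_sq (b : Bool) : zsign b ^ 2 = 1 := by
  cases b <;> norm_num [zsign]

lemma zsign_xor (a b : Bool) : zsign (xor a b) = zsign a * zsign b := by
  cases a <;> cases b <;> norm_num [zsign]

lemma zsign_not (b : Bool) : zsign (!b) = -zsign b := by
  cases b <;> norm_num [zsign]

lemma psiXOR_eq_ghz : psiXOR = (4 : ℂ)⁻¹ • (tensor (fun _ _ => 1) + tensor fun _ => zsign) := by
  funext s
  simp only [psiXOR, tensor, Fin.prod_univ_three, Pi.smul_apply, Pi.add_apply, smul_eq_mul]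
  generalize s 0 = a, s 1 = b, s 2 = c
  cases a <;> cases b <;> cases c <;> norm_num

lemma amp_psiXOR (c : Fin 3 → M) (o : Fin 3 → Bool) :
    amp psiXOR c o = (4 : ℂ)⁻¹ * ((∏ i, ∑ b, conj (mvec (c i) (o i) b) * 1) +
      ∏ i, ∑ b, conj (mvec (c i) (o i) b) * zsign b) := by
  rw [amp, inner'_eq_dotProduct, psiXOR_eq_ghz, dotProduct_smul, dotProduct_add,
    ← inner'_eq_dotProduct, ← inner'_eq_dotProduct, inner'_tensor_tensor, inner'_tensor_tensor,
    smul_eq_mul]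

lemma sum_conj_evec_mul (b : Bool) (w : Bool → ℂ) : ∑ b', conj (evec b b') * w b' = w b := by
  cases b <;> simp [evec]

lemma sum_conj_yvec_mul (b : Bool) (w : Bool → ℂ) :
    ∑ b', conj (yvec b b') * w b' = (w false - I * zsign b * w true) / √2 := by
  cases b <;> simp [yvec] <;> ring

lemma mermin_identity {R : Type*} [CommRing R] {i x y : R} (hi : i ^ 2 = -1) (hx : x ^ 2 = 1)
    (hy : y ^ 2 = 1) : (1 - i * x) * (1 - i * y) + (1 + i * x) * (1 + i * y) * (x * y) = 0 := by
  linear_combination (x * y + x ^ 2 * y ^ 2) * hi + (i * y - y ^ 2) * hx + (i * x - 1) * hy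

lemma amp_YYZ_eq_zero (o : Fin 3 → Bool) (h : o 2 = xor (o 0) (o 1)) :
    amp psiXOR ![M.Y, M.Y, M.Z] o = 0 := by
  simp only [amp_psiXOR, Fin.prod_univ_three, Matrix.cons_val, mvec, sum_conj_evec_mul,
    sum_conj_yvec_mul, zsign_false, zsign_true, h, zsign_xor]
  linear_combination (√2 : ℂ)⁻¹ ^ 2 / 4 * mermin_identity I_sq (zsign_sq (o 0)) (zsign_sq (o 1))

lemma amp_YZY_eq_zero (o : Fin 3 → Bool) (h : o 1 = xor (o 0) (o 2)) :
    amp psiXOR ![M.Y, M.Z, M.Y] o = 0 := by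
  simp only [amp_psiXOR, Fin.prod_univ_three, Matrix.cons_val, mvec, sum_conj_evec_mul,
    sum_conj_yvec_mul, zsign_false, zsign_true, h, zsign_xor]
  linear_combination (√2 : ℂ)⁻¹ ^ 2 / 4 * mermin_identity I_sq (zsign_sq (o 0)) (zsign_sq (o 2))

lemma amp_ZYY_eq_zero (o : Fin 3 → Bool) (h : o 0 = xor (o 1) (o 2)) :
    amp psiXOR ![M.Z, M.Y, M.Y] o = 0 := by
  simp only [amp_psiXOR, Fin.prod_univ_three, Matrix.cons_val, mvec, sum_conj_evec_mul,
    sum_conj_yvec_mul, zsign_false, zsign_true, h, zsign_xor]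
  linear_combination (√2 : ℂ)⁻¹ ^ 2 / 4 * mermin_identity I_sq (zsign_sq (o 1)) (zsign_sq (o 2))

lemma amp_ZZZ_eq_zero (o : Fin 3 → Bool) (h : o 2 ≠ xor (o 0) (o 1)) :
    amp psiXOR ![M.Z, M.Z, M.Z] o = 0 := by
  rw [← Bool.eq_not_iff] at h
  simp only [amp_psiXOR, Fin.prod_univ_three, Matrix.cons_val, mvec, sum_conj_evec_mul, h,
    zsign_not, zsign_xor]
  linear_combination -(zsign (o 1) ^ 2 * zsign_sq (o 0) + zsign_sq (o 1)) / 4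

lemma mermin_parity (yA yB yC zA zB zC : Bool) (hZZZ : zC = xor zA zB) (hYYZ : zC ≠ xor yA yB)
    (hYZY : zB ≠ xor yA yC) (hZYY : zA ≠ xor yB yC) : False := by
  subst hZZZ
  revert yA yB yC zA zB
  decide

/-- The XOR state is strongly contextual for `Y`/`Z` measurements: no global
assignment induces a possible outcome in every context. -/
theorem xor_strongly_contextual :
    ¬ ∃ g : Fin 3 → M → Bool, consistent psiXOR g := by
  rintro ⟨g, hg⟩
  refine mermin_parity (g 0 .Y) (g 1 .Y) (g 2 .Y) (g 0 .Z) (g 1 .Z) (g 2 .Z) ?_ ?_ ?_ ?_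
  · by_contra h
    exact hg ![.Z, .Z, .Z] (amp_ZZZ_eq_zero _ h)
  · exact fun h => hg ![.Y, .Y, .Z] (amp_YYZ_eq_zero _ h)
  · exact fun h => hg ![.Y, .Z, .Y] (amp_YZY_eq_zero _ h)
  · exact fun h => hg ![.Z, .Y, .Y] (amp_ZYY_eq_zero _ h)
end
end

section
/- For all a, b, c : Bool, the amplitude of the outcome (a, b, c) for the XOR state in the context measuring Y at the first two parties and Z at the third is nonzero if and only if xor a (xor b c) = true; that is, ⟨y(a) ⊗ y(b) ⊗ e(c), ψ_XOR⟩ ≠ 0 ↔ xor a (xor b c) = true. -/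
noncomputable section

/-!
Pairing with the `Z`-eigenvector `e(c)` fixes the third bit, and the XOR state then forces the
second bit to be `x ⊕ c`, so the amplitude is `½ ∑ₓ conj (y(a) x) · conj (y(b) (x ⊕ c))`.
Conjugation swaps the two `Y`-eigenvectors, which does not change the parity `a ⊕ b ⊕ c`.
Writing `y(a) true = ω / √2` and `y(b) true = ω' / √2` with `ω = yphase a`, `ω' = yphase b`,
the sum `∑ₓ y(a) x · y(b) (x ⊕ c)` is `(1 + ω ω') / 2` for `c = false` and `(ω + ω') / 2` for
`c = true`. If `a = b` then `ω ω' = -1` and `ω + ω' = ±2i`; if `a ≠ b` then `ω ω' = 1` and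
`ω + ω' = 0`.
-/

open ComplexConjugate

theorem sum_fun_fin_succ {α β : Type*} [Fintype α] [AddCommMonoid β] {n : ℕ}
    (f : (Fin (n + 1) → α) → β) :
    ∑ s, f s = ∑ x, ∑ t : Fin n → α, f (Fin.cons x t) := by
  rw [← (Fin.consEquiv fun _ => α).sum_comp, Fintype.sum_prod_type]
  rfl

theorem sum_fun_fin_three {α β : Type*} [Fintype α] [AddCommMonoid β]
    (f : (Fin 3 → α) → β) :
    ∑ s, f s = ∑ x, ∑ y, ∑ z, f ![x, y, z] := by
  simp only [sum_fun_fin_succ, Fintype.sum_unique]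
  rfl

theorem sum_star_evec_mul (c : Bool) (g : Bool → ℂ) : ∑ z, conj (evec c z) * g z = g c := by
  simp [evec]

theorem psiXOR_cons (x y z : Bool) :
    psiXOR ![x, y, z] = if y = (x ^^ z) then 1 / 2 else 0 := by
  cases x <;> cases y <;> cases z <;> simp [psiXOR]

theorem inner'_tensor_evec_psiXOR (u v : Bool → ℂ) (c : Bool) :
    inner' (tensor ![u, v, evec c]) psiXOR =
      (1 / 2) * ∑ x, conj (u x) * conj (v (x ^^ c)) := by
  calc inner' (tensor ![u, v, evec c]) psiXOR
      = ∑ x, ∑ y, conj (u x) * conj (v y) * ∑ z, conj (evec c z) * psiXOR ![x, y, z] := by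
        simp only [inner', sum_fun_fin_three, tensor, Fin.prod_univ_three, map_mul,
          Finset.mul_sum, mul_assoc]
        rfl
    _ = ∑ x, ∑ y, conj (u x) * conj (v y) * (if y = (x ^^ c) then 1 / 2 else 0) := by
        simp only [sum_star_evec_mul, psiXOR_cons]
    _ = (1 / 2) * ∑ x, conj (u x) * conj (v (x ^^ c)) := by
        rw [Finset.mul_sum]
        exact Fintype.sum_congr _ _ fun x => by simp [mul_comm]

theorem star_yvec (a x : Bool) : conj (yvec a x) = yvec (!a) x := by
  cases a <;> cases x <;> simp [yvec, Complex.conj_ofReal]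

def yphase (a : Bool) : ℂ := if a then -Complex.I else Complex.I

theorem yphase_ne_zero (a : Bool) : yphase a ≠ 0 := by
  cases a <;> simp [yphase]

theorem yvec_mul_yvec (a b x y : Bool) :
    yvec a x * yvec b y = (if x then yphase a else 1) * (if y then yphase b else 1) / 2 := by
  have hsq : ((Real.sqrt 2 : ℝ) : ℂ)⁻¹ * ((Real.sqrt 2 : ℝ) : ℂ)⁻¹ = 1 / 2 := by
    rw [← mul_inv, ← Complex.ofReal_mul, Real.mul_self_sqrt zero_le_two]; norm_num
  calc yvec a x * yvec b y
      = (if x then yphase a else 1) * (if y then yphase b else 1) *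
          (((Real.sqrt 2 : ℝ) : ℂ)⁻¹ * ((Real.sqrt 2 : ℝ) : ℂ)⁻¹) := by
        simp only [yvec, yphase]; split_ifs <;> ring
    _ = _ := by rw [hsq, mul_one_div]

theorem sum_yvec_mul_yvec_xor (a b c : Bool) :
    ∑ x, yvec a x * yvec b (x ^^ c) =
      if a ^^ (b ^^ c) then (if c then yphase a else 1) else 0 := by
  cases a <;> cases b <;> cases c <;> simp [yvec_mul_yvec, yphase] <;> ring_nf

/-- The amplitude of outcome `(a,b,c)` for the XOR state in the `YYZ` context is
nonzero iff `a ⊕ b ⊕ c = true`. -/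
theorem xor_yyz_support (a b c : Bool) :
    inner' (tensor ![yvec a, yvec b, evec c]) psiXOR ≠ 0 ↔
      Bool.xor a (Bool.xor b c) = true := by
  rw [inner'_tensor_evec_psiXOR]
  simp only [star_yvec, sum_yvec_mul_yvec_xor, Bool.not_xor, Bool.xor_not, Bool.not_not]
  split_ifs with hodd <;> simp [hodd, yphase_ne_zero]
end
end
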